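/- Let A be a real m×N matrix such that A Aᵀ is invertible (regarded also as the linear map x ↦ A x from ℝ^N to ℝ^m), and let v ∈ ker A. Define the affine map φ : ℝ^m → ℝ^N by φ(y) = Aᵀ(A Aᵀ)⁻¹ y + v/2. Then: (i) for every x ∈ ℝ^N of the form x = u + t·v with u ∈ (ker A)ᗮ and t ∈ [0,1], one has ‖φ(A x) − x‖ ≤ ‖v‖/2; hence, if v ≠ 0, for every set M₁ with {0, v} ⊆ M₁ ⊆ {u + t·v : u ∈ (ker A)ᗮ, t ∈ [0,1]}, the map φ attains the optimality constant of (A, M₁), which equals ‖v‖/2; (ii) if moreover β_min²·I ≼ A Aᵀ for some β_min > 0, then ‖Aᵀ(A Aᵀ)⁻¹‖_op ≤ 1/β_min, so φ is (1/β_min)-Lipschitz. -/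

import Mathlib

open scoped ENNReal

/-- Worst-case (ℓ²) reconstruction error of `φ` on the set `M₁` for the forward map `A`. -/
noncomputable def worstError {N m : ℕ}
    (A : EuclideanSpace ℝ (Fin N) →ₗ[ℝ] EuclideanSpace ℝ (Fin m))
    (M₁ : Set (EuclideanSpace ℝ (Fin N)))
    (φ : EuclideanSpace ℝ (Fin m) → EuclideanSpace ℝ (Fin N)) : ℝ≥0∞ :=
  ⨆ x : M₁, (‖φ (A (x : EuclideanSpace ℝ (Fin N))) - (x : EuclideanSpace ℝ (Fin N))‖₊ : ℝ≥0∞)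

/-- Optimality constant of the pair `(A, M₁)`: the infimum of the worst-case error
over all reconstruction maps. -/
noncomputable def optConst {N m : ℕ}
    (A : EuclideanSpace ℝ (Fin N) →ₗ[ℝ] EuclideanSpace ℝ (Fin m))
    (M₁ : Set (EuclideanSpace ℝ (Fin N))) : ℝ≥0∞ :=
  ⨅ φ : EuclideanSpace ℝ (Fin m) → EuclideanSpace ℝ (Fin N), worstError A M₁ φ
open Matrix

/-- Operator norm of a real matrix induced by the ℓ² norms. -/
noncomputable def matOpNorm {k l : ℕ} (M : Matrix (Fin k) (Fin l) ℝ) : ℝ :=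
  ‖LinearMap.toContinuousLinearMap (Matrix.toEuclideanLin M)‖

/-! Since `Aᵀ(AAᵀ)⁻¹` is a right inverse of `A` whose range lies in `range Aᵀ = (ker A)ᗮ`, it
inverts `A` on `(ker A)ᗮ`; hence the error of `φ` at `u + t • v` is `(1/2 - t) • v`, of norm at most
`‖v‖/2`. Conversely `0` and `v` have the same measurement `0`, so any reconstruction map errs by at
least `‖v‖/2` at one of them. For the Lipschitz bound write `y = AAᵀ z`: then
`‖Aᵀ z‖² = ⟪z, y⟫ ≤ ‖z‖ ‖y‖` and `β² ‖z‖² ≤ ⟪z, y⟫`, so `β ‖Aᵀ z‖ ≤ ‖y‖`. -/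

open scoped RealInnerProductSpace

section InnerProductSpace

variable {E F : Type*} [NormedAddCommGroup E] [InnerProductSpace ℝ E]
  [NormedAddCommGroup F] [InnerProductSpace ℝ F]

theorem LinearMap.apply_apply_eq_of_mem_orthogonal_ker {B : E →ₗ[ℝ] F} {P : F →ₗ[ℝ] E}
    (hBP : B ∘ₗ P = LinearMap.id) (hP : LinearMap.range P ≤ (LinearMap.ker B)ᗮ) {u : E}
    (hu : u ∈ (LinearMap.ker B)ᗮ) : P (B u) = u := by
  have hker : P (B u) - u ∈ LinearMap.ker B := by
    rw [LinearMap.mem_ker, map_sub, ← LinearMap.comp_apply, hBP, LinearMap.id_apply, sub_self]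
  have horth : P (B u) - u ∈ (LinearMap.ker B)ᗮ :=
    Submodule.sub_mem _ (hP (LinearMap.mem_range_self P _)) hu
  have := (Submodule.inf_orthogonal_eq_bot (LinearMap.ker B)).le ⟨hker, horth⟩
  rwa [Submodule.mem_bot, sub_eq_zero] at this

theorem LinearMap.mul_norm_adjoint_le_norm_apply_adjoint [FiniteDimensional ℝ E]
    [FiniteDimensional ℝ F] (T : E →ₗ[ℝ] F) {β : ℝ} (hβ : 0 < β)
    (hT : ∀ z, β * ‖z‖ ≤ ‖T.adjoint z‖) (z : F) :
    β * ‖T.adjoint z‖ ≤ ‖T (T.adjoint z)‖ := by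
  have hsq : ‖T.adjoint z‖ ^ 2 ≤ ‖T (T.adjoint z)‖ * ‖z‖ := by
    rw [← real_inner_self_eq_norm_sq, LinearMap.adjoint_inner_right]
    exact real_inner_le_norm _ _
  rcases (norm_nonneg (T.adjoint z)).eq_or_lt with h | h
  · rw [← h, mul_zero]; exact norm_nonneg _
  · nlinarith [hT z, norm_nonneg (T (T.adjoint z))]

end InnerProductSpace

namespace Matrix

theorem toEuclideanLin_mul {ι κ ν : Type*} [Fintype κ] [Fintype ν] [DecidableEq κ]
    [DecidableEq ν] (M : Matrix ι κ ℝ) (P : Matrix κ ν ℝ) :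
    toEuclideanLin (M * P) = toEuclideanLin M ∘ₗ toEuclideanLin P := by
  ext x : 1
  simp [toLpLin_apply, mulVec_mulVec]

variable {ι κ : Type*} [Fintype ι] [Fintype κ] [DecidableEq ι] [DecidableEq κ]

theorem toEuclideanLin_one :
    toEuclideanLin (1 : Matrix ι ι ℝ) = LinearMap.id := by
  ext x : 1
  simp

theorem toEuclideanLin_transpose (M : Matrix ι κ ℝ) :
    toEuclideanLin Mᵀ = (toEuclideanLin M).adjoint := by
  rw [← toEuclideanLin_conjTranspose_eq_adjoint, conjTranspose_eq_transpose_of_trivial]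

theorem PosSemidef.mul_norm_sq_le_inner {G : Matrix ι ι ℝ} {c : ℝ}
    (hG : (G - c • 1).PosSemidef) (z : EuclideanSpace ℝ ι) :
    c * ‖z‖ ^ 2 ≤ ⟪toEuclideanLin G z, z⟫ := by
  have := (isPositive_toEuclideanLin_iff.mpr hG).inner_nonneg_left z
  rw [map_sub, map_smul, toEuclideanLin_one, LinearMap.sub_apply, LinearMap.smul_apply,
    LinearMap.id_apply, inner_sub_left, real_inner_smul_left, real_inner_self_eq_norm_sq] at this
  linarith

theorem toEuclideanLin_pinv_apply_of_mem_orthogonal_ker (A : Matrix ι κ ℝ)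
    (hA : IsUnit (A * Aᵀ).det) {u : EuclideanSpace ℝ κ}
    (hu : u ∈ (LinearMap.ker (toEuclideanLin A))ᗮ) :
    toEuclideanLin (Aᵀ * (A * Aᵀ)⁻¹) (toEuclideanLin A u) = u := by
  refine LinearMap.apply_apply_eq_of_mem_orthogonal_ker ?_ ?_ hu
  · rw [← toEuclideanLin_mul, ← Matrix.mul_assoc, mul_nonsing_inv _ hA, toEuclideanLin_one]
  · rw [LinearMap.orthogonal_ker, ← toEuclideanLin_transpose, toEuclideanLin_mul]
    exact LinearMap.range_comp_le_range _ _

theorem mul_norm_toEuclideanLin_pinv_le (A : Matrix ι κ ℝ) (hA : IsUnit (A * Aᵀ).det)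
    {β : ℝ} (hβ : 0 < β) (hAβ : (A * Aᵀ - β ^ 2 • 1).PosSemidef) (y : EuclideanSpace ℝ ι) :
    β * ‖toEuclideanLin (Aᵀ * (A * Aᵀ)⁻¹) y‖ ≤ ‖y‖ := by
  set T := toEuclideanLin A
  have hAAT : toEuclideanLin (A * Aᵀ) = T ∘ₗ T.adjoint := by
    rw [toEuclideanLin_mul, toEuclideanLin_transpose]
  have hT : ∀ z, β * ‖z‖ ≤ ‖T.adjoint z‖ := fun z => by
    have := hAβ.mul_norm_sq_le_inner z
    rw [hAAT, LinearMap.comp_apply, ← LinearMap.adjoint_inner_right,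
      real_inner_self_eq_norm_sq, ← mul_pow] at this
    exact (pow_le_pow_iff_left₀ (by positivity) (norm_nonneg _) two_ne_zero).mp this
  set z := toEuclideanLin (A * Aᵀ)⁻¹ y
  have hz : T (T.adjoint z) = y := by
    rw [← LinearMap.comp_apply, ← hAAT, ← LinearMap.comp_apply, ← toEuclideanLin_mul,
      mul_nonsing_inv _ hA, toEuclideanLin_one, LinearMap.id_apply]
  have := T.mul_norm_adjoint_le_norm_apply_adjoint hβ hT z
  rwa [hz, ← toEuclideanLin_transpose, ← LinearMap.comp_apply, ← toEuclideanLin_mul] at this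

theorem norm_toEuclideanLin_pinv_add_half_sub_le (A : Matrix ι κ ℝ) (hA : IsUnit (A * Aᵀ).det)
    {v : EuclideanSpace ℝ κ} (hv : v ∈ LinearMap.ker (toEuclideanLin A))
    {u : EuclideanSpace ℝ κ} (hu : u ∈ (LinearMap.ker (toEuclideanLin A))ᗮ)
    {t : ℝ} (ht : t ∈ Set.Icc (0 : ℝ) 1) :
    ‖toEuclideanLin (Aᵀ * (A * Aᵀ)⁻¹) (toEuclideanLin A (u + t • v)) + (2 : ℝ)⁻¹ • v -
      (u + t • v)‖ ≤ ‖v‖ / 2 := by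
  rw [map_add, map_smul, LinearMap.mem_ker.mp hv, smul_zero, add_zero,
    toEuclideanLin_pinv_apply_of_mem_orthogonal_ker A hA hu,
    show u + (2 : ℝ)⁻¹ • v - (u + t • v) = ((2 : ℝ)⁻¹ - t) • v by module, norm_smul,
    Real.norm_eq_abs, div_eq_inv_mul]
  gcongr
  rw [abs_le]
  constructor <;> linarith [ht.1, ht.2]

end Matrix

section Reconstruction

variable {N m : ℕ} {A : EuclideanSpace ℝ (Fin N) →ₗ[ℝ] EuclideanSpace ℝ (Fin m)}
  {M₁ : Set (EuclideanSpace ℝ (Fin N))}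

theorem enorm_le_worstError (φ : EuclideanSpace ℝ (Fin m) → EuclideanSpace ℝ (Fin N))
    {x : EuclideanSpace ℝ (Fin N)} (hx : x ∈ M₁) :
    ‖φ (A x) - x‖ₑ ≤ worstError A M₁ φ :=
  le_iSup (fun x : M₁ => (‖φ (A x) - x‖₊ : ℝ≥0∞)) ⟨x, hx⟩

theorem worstError_le_ofReal {φ : EuclideanSpace ℝ (Fin m) → EuclideanSpace ℝ (Fin N)} {c : ℝ}
    (h : ∀ x ∈ M₁, ‖φ (A x) - x‖ ≤ c) : worstError A M₁ φ ≤ ENNReal.ofReal c :=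
  iSup_le fun x => by
    rw [← enorm_eq_nnnorm, ← ofReal_norm]
    exact ENNReal.ofReal_le_ofReal (h x x.2)

theorem ofReal_half_norm_le_worstError {v : EuclideanSpace ℝ (Fin N)} (hv : A v = 0)
    (hM₁ : {0, v} ⊆ M₁) (ψ : EuclideanSpace ℝ (Fin m) → EuclideanSpace ℝ (Fin N)) :
    ENNReal.ofReal (‖v‖ / 2) ≤ worstError A M₁ ψ := by
  have h0 := enorm_le_worstError (A := A) ψ (hM₁ (Set.mem_insert _ _))
  have hv' := enorm_le_worstError (A := A) ψ (hM₁ (Set.mem_insert_of_mem _ rfl))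
  rw [map_zero, sub_zero] at h0
  rw [hv] at hv'
  rw [ENNReal.ofReal_div_of_pos two_pos, ofReal_norm, ENNReal.ofReal_ofNat]
  refine ENNReal.div_le_of_le_mul ?_
  calc ‖v‖ₑ = ‖ψ 0 - (ψ 0 - v)‖ₑ := by rw [sub_sub_cancel]
    _ ≤ ‖ψ 0‖ₑ + ‖ψ 0 - v‖ₑ := enorm_sub_le
    _ ≤ worstError A M₁ ψ * 2 := by rw [mul_two]; exact add_le_add h0 hv'

theorem worstError_eq_optConst_of_le {φ : EuclideanSpace ℝ (Fin m) → EuclideanSpace ℝ (Fin N)}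
    {c : ℝ≥0∞} (hφ : worstError A M₁ φ ≤ c) (hc : ∀ ψ, c ≤ worstError A M₁ ψ) :
    worstError A M₁ φ = optConst A M₁ ∧ optConst A M₁ = c := by
  have hopt : optConst A M₁ = c := le_antisymm ((iInf_le _ φ).trans hφ) (le_iInf hc)
  exact ⟨le_antisymm (hopt ▸ hφ) (iInf_le _ φ), hopt⟩

end Reconstruction

theorem matOpNorm_pinv_le {m N : ℕ} (A : Matrix (Fin m) (Fin N) ℝ) (hA : IsUnit (A * Aᵀ).det)
    {β : ℝ} (hβ : 0 < β) (hAβ : (A * Aᵀ - β ^ 2 • 1).PosSemidef) :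
    matOpNorm (Aᵀ * (A * Aᵀ)⁻¹) ≤ 1 / β :=
  ContinuousLinearMap.opNorm_le_bound _ (by positivity) fun y => by
    rw [one_div_mul_eq_div, le_div_iff₀' hβ]
    exact mul_norm_toEuclideanLin_pinv_le A hA hβ hAβ y

/-- with `φ(y) = Aᵀ(AAᵀ)⁻¹ y + v/2` (pseudoinverse plus bias), one has
(i) `‖φ(Ax) - x‖ ≤ ‖v‖/2` for all `x = u + t·v`, `u ∈ (ker A)ᗮ`, `t ∈ [0,1]`, so `φ`
attains the optimality constant `‖v‖/2` of `(A, M₁)` for any `{0,v} ⊆ M₁` contained in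
that set; (ii) if `β_min² I ≼ AAᵀ` then `‖Aᵀ(AAᵀ)⁻¹‖ ≤ 1/β_min` and `φ` is
`(1/β_min)`-Lipschitz. -/
theorem stmt_12 (m N : ℕ) (A : Matrix (Fin m) (Fin N) ℝ)
    (hAAT : IsUnit (A * Aᵀ).det)
    (v : EuclideanSpace ℝ (Fin N)) (hv : v ∈ LinearMap.ker (Matrix.toEuclideanLin A)) :
    (∀ (u : EuclideanSpace ℝ (Fin N)) (t : ℝ),
        u ∈ (LinearMap.ker (Matrix.toEuclideanLin A))ᗮ → t ∈ Set.Icc (0 : ℝ) 1 →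
        ‖(Matrix.toEuclideanLin (Aᵀ * (A * Aᵀ)⁻¹)) ((Matrix.toEuclideanLin A) (u + t • v)) +
            (2 : ℝ)⁻¹ • v - (u + t • v)‖ ≤ ‖v‖ / 2) ∧
    (v ≠ 0 → ∀ M₁ : Set (EuclideanSpace ℝ (Fin N)),
        {0, v} ⊆ M₁ →
        M₁ ⊆ {z | ∃ u ∈ (LinearMap.ker (Matrix.toEuclideanLin A))ᗮ,
                  ∃ t ∈ Set.Icc (0 : ℝ) 1, z = u + t • v} →
        worstError (Matrix.toEuclideanLin A) M₁
            (fun y => (Matrix.toEuclideanLin (Aᵀ * (A * Aᵀ)⁻¹)) y + (2 : ℝ)⁻¹ • v) =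
          optConst (Matrix.toEuclideanLin A) M₁ ∧
        optConst (Matrix.toEuclideanLin A) M₁ = ENNReal.ofReal (‖v‖ / 2)) ∧
    (∀ βmin : ℝ, 0 < βmin →
        (A * Aᵀ - (βmin ^ 2) • (1 : Matrix (Fin m) (Fin m) ℝ)).PosSemidef →
        matOpNorm (Aᵀ * (A * Aᵀ)⁻¹) ≤ 1 / βmin ∧
        LipschitzWith (Real.toNNReal (1 / βmin))
          (fun y => (Matrix.toEuclideanLin (Aᵀ * (A * Aᵀ)⁻¹)) y + (2 : ℝ)⁻¹ • v)) := by
  refine ⟨fun u t hu ht => norm_toEuclideanLin_pinv_add_half_sub_le A hAAT hv hu ht,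
    fun _ M₁ hM₁ hM₁_sub => ?_, fun β hβ hAβ => ⟨matOpNorm_pinv_le A hAAT hβ hAβ, ?_⟩⟩
  · refine worstError_eq_optConst_of_le (worstError_le_ofReal fun x hx => ?_)
      (ofReal_half_norm_le_worstError hv hM₁)
    obtain ⟨u, hu, t, ht, rfl⟩ := hM₁_sub hx
    exact norm_toEuclideanLin_pinv_add_half_sub_le A hAAT hv hu ht
  · have hP := (LinearMap.toContinuousLinearMap (toEuclideanLin (Aᵀ * (A * Aᵀ)⁻¹))).lipschitz
    have hK : ‖LinearMap.toContinuousLinearMap (toEuclideanLin (Aᵀ * (A * Aᵀ)⁻¹))‖₊ ≤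
        (1 / β).toNNReal :=
      (Real.le_toNNReal_iff_coe_le (by positivity)).mpr (matOpNorm_pinv_le A hAAT hβ hAβ)
    simpa using (hP.weaken hK).add (LipschitzWith.const ((2 : ℝ)⁻¹ • v))
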